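/- In the simplicial setup, let b ∈ B_A and let m be a monomial of S dividing m_b. Then m = m_{b'} for some b' ∈ B_A. -/

import Mathlib

namespace SimplicialToric

/-- `eVec d α i` is `α` times the `i`-th standard basis vector of `ℕ^d`. -/
def eVec (d α : ℕ) (i : Fin d) : Fin d → ℕ := fun j => if j = i then α else 0

/-- The Hilbert basis of a submonoid `B ⊆ ℕ^d`: the set of irreducible elements
(in `ℕ^d` the only unit is `0`). -/
def Hilb {d : ℕ} (B : AddSubmonoid (Fin d → ℕ)) : Set (Fin d → ℕ) :=
  {b | b ∈ B ∧ b ≠ 0 ∧ ∀ x ∈ B, ∀ y ∈ B, b = x + y → x = 0 ∨ y = 0}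

/-- The submonoid `A = Σᵢ ℤ≥0·eᵢ = αℤ≥0^d`. -/
def Amon (d α : ℕ) : AddSubmonoid (Fin d → ℕ) :=
  AddSubmonoid.closure (Set.range (eVec d α))

/-- `B_A = {x ∈ B : x − a ∉ B for every a ∈ A \ {0}}`. -/
def BA {d : ℕ} (B : AddSubmonoid (Fin d → ℕ)) (α : ℕ) : Set (Fin d → ℕ) :=
  {x | x ∈ B ∧ ∀ z ∈ Amon d α, z ≠ 0 → ∀ y ∈ B, x ≠ y + z}

/-- The generators `a₁,…,a_c,e₁,…,e_d` of `B`, indexed by the variables of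
`S = K[x₁,…,x_c,y₁,…,y_d]`; variable `Fin.castAdd d i` is `xᵢ`, variable
`Fin.natAdd c j` is `yⱼ`. -/
def gens (c d α : ℕ) (a : Fin c → Fin d → ℕ) : Fin (c + d) → Fin d → ℕ :=
  Fin.addCases a (eVec d α)

/-- The element of `B` represented by the monomial with exponent vector `σ`:
`π(x^μ y^ν) = t^(valE σ)`. -/
def valE (c d α : ℕ) (a : Fin c → Fin d → ℕ) (σ : Fin (c + d) →₀ ℕ) : Fin d → ℕ :=
  ∑ v : Fin (c + d), σ v • gens c d α a v

/-- total degree of a monomial (exponent vector). -/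
def degE {N : ℕ} (σ : Fin N →₀ ℕ) : ℕ := ∑ v, σ v

/-- the graded reverse lexicographic order: `grevlex σ τ` means `σ ≺ τ`,
i.e. `deg σ < deg τ`, or degrees agree and the last nonzero entry of `τ − σ`
is negative. -/
def grevlex {N : ℕ} (σ τ : Fin N →₀ ℕ) : Prop :=
  degE σ < degE τ ∨ (degE σ = degE τ ∧ ∃ k, τ k < σ k ∧ ∀ l, k < l → σ l = τ l)

/-- `x ∼ y` iff `x − y ∈ gp(A) = αℤ^d`. -/
def Rel {d : ℕ} (α : ℕ) (x y : Fin d → ℕ) : Prop :=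
  ∀ j, (α : ℤ) ∣ (x j : ℤ) - (y j : ℤ)

/-- `Γ` is an equivalence class of `B_A` modulo `αℤ^d`. -/
def IsClass {d : ℕ} (B : AddSubmonoid (Fin d → ℕ)) (α : ℕ) (Γ : Set (Fin d → ℕ)) : Prop :=
  ∃ x ∈ BA B α, Γ = {y | y ∈ BA B α ∧ Rel α x y}

/-- the total order on an equivalence class of `B_A`: `b ≺ c` iff the last
nonzero entry of `b − c` is negative. -/
def ltCls {d : ℕ} (x y : Fin d → ℕ) : Prop :=
  ∃ k, x k < y k ∧ ∀ l, k < l → x l = y l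

/-- `joinSub x y = x∨y − y`, where `x∨y` is the componentwise maximum. -/
def joinSub {d : ℕ} (x y : Fin d → ℕ) : Fin d → ℕ := fun j => max (x j) (y j) - y j

/-- the monomial with exponents `σ` lies in `T = K[y₁,…,y_d]`. -/
def yOnly (c d : ℕ) (σ : Fin (c + d) →₀ ℕ) : Prop := ∀ i : Fin c, σ (Fin.castAdd d i) = 0

/-- the monomial with exponents `σ` involves only the `x`-variables. -/
def xOnly (c d : ℕ) (σ : Fin (c + d) →₀ ℕ) : Prop := ∀ j : Fin d, σ (Fin.natAdd c j) = 0

/-- the set `N₁`, for a given choice `m` of the minimal monomials `m_b`. -/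
def N1set (c d α : ℕ) (a : Fin c → Fin d → ℕ) (B : AddSubmonoid (Fin d → ℕ))
    (m : (Fin d → ℕ) → (Fin (c + d) →₀ ℕ)) : Set (Fin (c + d) →₀ ℕ) :=
  {n | ∃ (i : Fin c) (b : Fin d → ℕ), b ∈ BA B α ∧
    n = Finsupp.single (Fin.castAdd d i) 1 + m b ∧ n ≠ m (a i + b)}

/-- the set `N₂ = ∪_Γ N_Γ`, where `N_Γ = {n(bᵢ,bⱼ) = m_{bⱼ}·m_{bᵢ∨bⱼ−bⱼ} : bᵢ ≺ bⱼ in Γ}`. -/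
def N2set {d : ℕ} (c α : ℕ) (B : AddSubmonoid (Fin d → ℕ))
    (m : (Fin d → ℕ) → (Fin (c + d) →₀ ℕ)) : Set (Fin (c + d) →₀ ℕ) :=
  {n | ∃ Γ, IsClass B α Γ ∧ ∃ bi ∈ Γ, ∃ bj ∈ Γ, ltCls bi bj ∧ n = m bj + m (joinSub bi bj)}

/-- `σ` is the exponent vector of the initial (i.e. `≺`-largest) term of `f`. -/
def IsLeadMon {N : ℕ} {K : Type*} [Field K] (f : MvPolynomial (Fin N) K)
    (σ : Fin N →₀ ℕ) : Prop :=
  σ ∈ f.support ∧ ∀ τ ∈ f.support, τ = σ ∨ grevlex τ σ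

/-- the initial ideal of `I` with respect to the graded reverse lexicographic order. -/
noncomputable def initialIdeal {N : ℕ} {K : Type*} [Field K] (I : Ideal (MvPolynomial (Fin N) K)) :
    Ideal (MvPolynomial (Fin N) K) :=
  Ideal.span {g | ∃ f ∈ I, ∃ σ, IsLeadMon f σ ∧ g = MvPolynomial.monomial σ (1 : K)}

end SimplicialToric

open SimplicialToric

/-! If `m_b = σ·τ` and `σ` were not the `≺`-minimal monomial over `b' = π(σ)`, then
`m_{b'}·τ ≺ σ·τ = m_b` would be a smaller monomial over `b`, since grevlex is compatible
with multiplication. And `b'` stays in `B_A`: a decomposition `b' = y + z` with `0 ≠ z ∈ A`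
gives `b = (y + π(τ)) + z`. -/

namespace SimplicialToric

section Grevlex

variable {N : ℕ}

lemma degE_add (σ τ : Fin N →₀ ℕ) : degE (σ + τ) = degE σ + degE τ := by
  simp only [degE, Finsupp.add_apply, Finset.sum_add_distrib]

lemma grevlex_add_right {σ τ : Fin N →₀ ℕ} (h : grevlex σ τ) (ρ : Fin N →₀ ℕ) :
    grevlex (σ + ρ) (τ + ρ) := by
  rcases h with hdeg | ⟨hdeg, k, hk, heq⟩
  · left
    rw [degE_add, degE_add]
    omega
  · right
    refine ⟨by rw [degE_add, degE_add, hdeg], k, ?_, fun l hl => ?_⟩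
    · simp only [Finsupp.add_apply]
      omega
    · simp only [Finsupp.add_apply, heq l hl]

lemma grevlex_asymm {σ τ : Fin N →₀ ℕ} (h : grevlex σ τ) : ¬ grevlex τ σ := by
  rintro (h' | ⟨hdeg', k', hk', heq'⟩) <;> rcases h with h | ⟨hdeg, k, hk, heq⟩
  · omega
  · omega
  · omega
  · rcases lt_trichotomy k k' with hlt | rfl | hlt
    · have := heq k' hlt
      omega
    · omega
    · have := heq' k hlt
      omega

lemma grevlex_irrefl (σ : Fin N →₀ ℕ) : ¬ grevlex σ σ :=
  fun h => grevlex_asymm h h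

end Grevlex

section Monomials

variable {c d α : ℕ} {a : Fin c → Fin d → ℕ}

lemma valE_add (σ τ : Fin (c + d) →₀ ℕ) :
    valE c d α a (σ + τ) = valE c d α a σ + valE c d α a τ := by
  simp only [valE, Finsupp.add_apply, add_smul, Finset.sum_add_distrib]

lemma valE_mem {B : AddSubmonoid (Fin d → ℕ)}
    (hBgen : B = AddSubmonoid.closure (Set.range a ∪ Set.range (eVec d α)))
    (σ : Fin (c + d) →₀ ℕ) : valE c d α a σ ∈ B := by
  have hgens : ∀ v, gens c d α a v ∈ B := by
    intro v
    rw [hBgen]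
    refine AddSubmonoid.subset_closure ?_
    induction v using Fin.addCases with
    | left i => exact Or.inl ⟨i, by rw [gens, Fin.addCases_left]⟩
    | right j => exact Or.inr ⟨j, by rw [gens, Fin.addCases_right]⟩
  exact B.sum_mem fun v _ => B.nsmul_mem (hgens v) _

lemma m_valE_eq_of_add_eq {B : AddSubmonoid (Fin d → ℕ)}
    (hBgen : B = AddSubmonoid.closure (Set.range a ∪ Set.range (eVec d α)))
    {m : (Fin d → ℕ) → (Fin (c + d) →₀ ℕ)}
    (hmval : ∀ b ∈ B, valE c d α a (m b) = b)
    (hmmin : ∀ b ∈ B, ∀ σ, valE c d α a σ = b → m b = σ ∨ grevlex (m b) σ)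
    {b : Fin d → ℕ} (hb : b ∈ B) {σ τ : Fin (c + d) →₀ ℕ} (hστ : m b = σ + τ) :
    m (valE c d α a σ) = σ := by
  set b' := valE c d α a σ
  have hb' : b' ∈ B := valE_mem hBgen σ
  refine (hmmin b' hb' σ rfl).resolve_right fun hlt => ?_
  have hsmaller : grevlex (m b' + τ) (m b) := hστ ▸ grevlex_add_right hlt τ
  have hval : valE c d α a (m b' + τ) = b := by
    rw [valE_add, hmval b' hb', ← valE_add, ← hστ, hmval b hb]
  rcases hmmin b hb (m b' + τ) hval with heq | hgt
  · exact grevlex_irrefl _ (heq ▸ hsmaller)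
  · exact grevlex_asymm hsmaller hgt

end Monomials

lemma mem_BA_of_add_mem_BA {d α : ℕ} {B : AddSubmonoid (Fin d → ℕ)} {x y : Fin d → ℕ}
    (hxy : x + y ∈ BA B α) (hx : x ∈ B) (hy : y ∈ B) : x ∈ BA B α := by
  refine ⟨hx, fun z hz hz0 w hw hxw => hxy.2 z hz hz0 (w + y) (B.add_mem hw hy) ?_⟩
  rw [hxw]
  abel

end SimplicialToric

theorem divisor_of_mb_is_mb'_general
    (c d α : ℕ)
    (a : Fin c → Fin d → ℕ) (B : AddSubmonoid (Fin d → ℕ))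
    (hBgen : B = AddSubmonoid.closure (Set.range a ∪ Set.range (eVec d α)))
    (m : (Fin d → ℕ) → (Fin (c + d) →₀ ℕ))
    (hmval : ∀ b ∈ B, valE c d α a (m b) = b)
    (hmmin : ∀ b ∈ B, ∀ σ, valE c d α a σ = b → m b = σ ∨ grevlex (m b) σ) :
    ∀ b ∈ BA B α, ∀ σ : Fin (c + d) →₀ ℕ, (∃ τ, m b = σ + τ) →
      ∃ b' ∈ BA B α, σ = m b' := by
  rintro b hb σ ⟨τ, hστ⟩
  have hsplit : valE c d α a σ + valE c d α a τ = b := by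
    rw [← valE_add, ← hστ, hmval b hb.1]
  refine ⟨valE c d α a σ, ?_, (m_valE_eq_of_add_eq hBgen hmval hmmin hb.1 hστ).symm⟩
  exact mem_BA_of_add_mem_BA (hsplit ▸ hb) (valE_mem hBgen σ) (valE_mem hBgen τ)

/-- If `b ∈ B_A` and a monomial `σ` divides `m_b`,
then `σ = m_{b'}` for some `b' ∈ B_A`. -/
theorem divisor_of_mb_is_mb'
    (c d α : ℕ) (hα : 0 < α)
    (a : Fin c → Fin d → ℕ) (B : AddSubmonoid (Fin d → ℕ))
    (hBgen : B = AddSubmonoid.closure (Set.range a ∪ Set.range (eVec d α)))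
    (hhilb : Hilb B = Set.range a ∪ Set.range (eVec d α))
    (hdeg : ∀ i, ∑ j, a i j = α)
    (m : (Fin d → ℕ) → (Fin (c + d) →₀ ℕ))
    (hmval : ∀ b ∈ B, valE c d α a (m b) = b)
    (hmmin : ∀ b ∈ B, ∀ σ, valE c d α a σ = b → m b = σ ∨ grevlex (m b) σ) :
    ∀ b ∈ BA B α, ∀ σ : Fin (c + d) →₀ ℕ, (∃ τ, m b = σ + τ) →
      ∃ b' ∈ BA B α, σ = m b' :=
  divisor_of_mb_is_mb'_general c d α a B hBgen m hmval hmmin
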